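/- arXiv:1802.03521 — 4 statements merged into one kernel-verified Lean document; each statement's English description precedes it below -/
import Mathlib

section
/- Let F be a smooth positive symmetric function on the positive cone Γ₊ ⊂ ℝⁿ, homogeneous of degree β, strictly increasing in each variable, and satisfying (∂F/∂κᵢ · κᵢ − ∂F/∂κⱼ · κⱼ)/(κᵢ − κⱼ) ≥ 0 for all i ≠ j with κᵢ ≠ κⱼ. Then for all κ ∈ Γ₊, βF(κ)·∑ᵢ κᵢ⁻² − (∑ᵢ κᵢ⁻¹)·(∑ᵢ ∂F/∂κᵢ) ≥ 0, with equality if and only if κ₁ = κ₂ = ⋯ = κₙ. -/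
open Finset

/-- Partial derivative `∂F/∂κᵢ` at `κ`. -/
noncomputable def pd {n : ℕ} (F : (Fin n → ℝ) → ℝ) (κ : Fin n → ℝ) (i : Fin n) : ℝ :=
  fderiv ℝ F κ (Pi.single i 1)

lemma pair_key {a b x y : ℝ} (hb : 0 < b) (hx : 0 < x) (hy : 0 < y)
    (h : x ≠ y → 0 ≤ (a * x - b * y) / (x - y)) :
    0 ≤ (a * x ^ 2 - b * y ^ 2) * (x - y) ∧
      ((a * x ^ 2 - b * y ^ 2) * (x - y) = 0 ↔ x = y) := by
  rcases eq_or_ne x y with he | hne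
  · subst he; simp
  · have hxy : x - y ≠ 0 := sub_ne_zero.mpr hne
    have h1 : 0 ≤ (a * x - b * y) * (x - y) := by
      have h0 := mul_nonneg (h hne) (sq_nonneg (x - y))
      calc (0:ℝ) ≤ (a*x-b*y)/(x-y) * (x-y)^2 := h0
        _ = (a*x - b*y)*(x-y) := by field_simp
    have h2 : 0 < b * y * (x - y) ^ 2 := by positivity
    have h3 : 0 < (a * x ^ 2 - b * y ^ 2) * (x - y) := by
      have hx0 : 0 ≤ x * ((a * x - b * y) * (x - y)) := mul_nonneg hx.le h1
      nlinarith
    exact ⟨h3.le, by constructor <;> intro hh <;> [exact absurd hh h3.ne'; exact absurd hh hne]⟩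

-- Euler relation
lemma euler {n : ℕ} (β : ℝ) (F : (Fin n → ℝ) → ℝ)
    (hsmooth : ContDiffOn ℝ (⊤ : ℕ∞) F {κ | ∀ i, 0 < κ i})
    (hhom : ∀ κ ∈ ({κ | ∀ i, 0 < κ i} : Set (Fin n → ℝ)), ∀ t : ℝ, 0 < t → F (t • κ) = t ^ β * F κ)
    (κ : Fin n → ℝ) (hκ : ∀ i, 0 < κ i) :
    ∑ i, pd F κ i * κ i = β * F κ := by
  have hU : IsOpen ({κ : Fin n → ℝ | ∀ i, 0 < κ i}) := by
    have : ({κ : Fin n → ℝ | ∀ i, 0 < κ i}) = Set.pi Set.univ (fun _ => Set.Ioi (0:ℝ)) := by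
      ext x; simp [Set.mem_pi]
    rw [this]
    exact isOpen_set_pi Set.finite_univ (fun _ _ => isOpen_Ioi)
  have hκΓ : κ ∈ ({κ : Fin n → ℝ | ∀ i, 0 < κ i}) := hκ
  have hdF : DifferentiableAt ℝ F κ :=
    (hsmooth.contDiffAt (hU.mem_nhds hκΓ)).differentiableAt (by simp)
  have hline : HasDerivAt (fun t : ℝ => t • κ) κ 1 := by
    simpa using (hasDerivAt_id (1:ℝ)).smul_const κ
  have hcomp : HasDerivAt (fun t : ℝ => F (t • κ)) (fderiv ℝ F κ κ) 1 := by
    have hdF' : HasFDerivAt F (fderiv ℝ F κ) ((1:ℝ) • κ) := by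
      rw [one_smul]; exact hdF.hasFDerivAt
    exact hdF'.comp_hasDerivAt 1 hline
  have hpow : HasDerivAt (fun t : ℝ => t ^ β * F κ) (β * F κ) 1 := by
    have := (Real.hasDerivAt_rpow_const (p := β) (Or.inl one_ne_zero)).mul_const (F κ)
    simpa using this
  have heq : (fun t : ℝ => t ^ β * F κ) =ᶠ[nhds 1] (fun t : ℝ => F (t • κ)) := by
    filter_upwards [Ioi_mem_nhds (by norm_num : (0:ℝ) < 1)] with t ht
    exact (hhom κ hκΓ t ht).symm
  have hcomp' : HasDerivAt (fun t : ℝ => F (t • κ)) (β * F κ) 1 := hpow.congr_of_eventuallyEq heq.symm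
  have hder : fderiv ℝ F κ κ = β * F κ := hcomp.unique hcomp'
  have hκsum : κ = ∑ i, κ i • (Pi.single i 1 : Fin n → ℝ) := by
    ext j
    simp [Finset.sum_apply, Pi.single_apply, mul_comm]
  calc ∑ i, pd F κ i * κ i = ∑ i, (fderiv ℝ F κ) (κ i • (Pi.single i 1 : Fin n → ℝ)) := by
        simp [pd, mul_comm]
    _ = (fderiv ℝ F κ) (∑ i, κ i • (Pi.single i 1 : Fin n → ℝ)) := by rw [map_sum]
    _ = β * F κ := by rw [← hκsum, hder]

/-- for a smooth, positive, symmetric, β-homogeneous, strictly monotone `F`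
on the positive cone satisfying condition iii), one has
`β F ∑ κᵢ⁻² − (∑ κᵢ⁻¹)(∑ ∂F/∂κᵢ) ≥ 0`, with equality iff all `κᵢ` are equal. -/
theorem stmt0 {n : ℕ} (hn : 1 ≤ n) (β : ℝ)
    (Γ : Set (Fin n → ℝ)) (hΓ : Γ = {κ | ∀ i, 0 < κ i})
    (F : (Fin n → ℝ) → ℝ)
    (hsmooth : ContDiffOn ℝ (⊤ : ℕ∞) F Γ)
    (hpos : ∀ κ ∈ Γ, 0 < F κ)
    (hsymm : ∀ κ ∈ Γ, ∀ σ : Equiv.Perm (Fin n), F (κ ∘ σ) = F κ)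
    (hhom : ∀ κ ∈ Γ, ∀ t : ℝ, 0 < t → F (t • κ) = t ^ β * F κ)
    (hmono : ∀ κ ∈ Γ, ∀ i, 0 < pd F κ i)
    (hiii : ∀ κ ∈ Γ, ∀ i j, i ≠ j → κ i ≠ κ j →
      0 ≤ (pd F κ i * κ i - pd F κ j * κ j) / (κ i - κ j)) :
    ∀ κ ∈ Γ,
      0 ≤ β * F κ * ∑ i, ((κ i)⁻¹) ^ 2 - (∑ i, (κ i)⁻¹) * ∑ i, pd F κ i ∧
      (β * F κ * ∑ i, ((κ i)⁻¹) ^ 2 - (∑ i, (κ i)⁻¹) * ∑ i, pd F κ i = 0 ↔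
        ∀ i j, κ i = κ j) := by
  subst hΓ
  intro κ hκ
  have hκ' : ∀ i, 0 < κ i := hκ
  have hE : ∑ i, pd F κ i * κ i = β * F κ := euler β F hsmooth hhom κ hκ'
  set a : Fin n → ℝ := pd F κ with ha
  have hane : ∀ i, 0 < a i := hmono κ hκ
  set T : Fin n → Fin n → ℝ := fun i j =>
    ((κ i)⁻¹)^2 * ((κ j)⁻¹)^2 * ((a i * (κ i)^2 - a j * (κ j)^2) * (κ i - κ j)) with hT
  -- each term key
  have hTkey : ∀ i j, 0 ≤ T i j ∧ (T i j = 0 ↔ κ i = κ j) := by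
    intro i j
    have hpk := pair_key (a := a i) (b := a j) (hane j) (hκ' i) (hκ' j)
      (fun hne => hiii κ hκ i j (fun hij => hne (by rw [hij])) hne)
    have hi0 := hκ' i
    have hj0 := hκ' j
    have hc : 0 < ((κ i)⁻¹)^2 * ((κ j)⁻¹)^2 := by positivity
    refine ⟨mul_nonneg hc.le hpk.1, ?_⟩
    rw [hT]
    constructor
    · intro h0
      have : (a i * (κ i)^2 - a j * (κ j)^2) * (κ i - κ j) = 0 := by
        rcases mul_eq_zero.mp h0 with h | h
        · exact absurd h hc.ne'
        · exact h
      exact hpk.2.mp this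
    · intro h0
      have := hpk.2.mpr h0
      simp [this]
  -- identity
  have hiden : β * F κ * ∑ i, ((κ i)⁻¹) ^ 2 - (∑ i, (κ i)⁻¹) * ∑ i, a i
      = (1/2) * ∑ i, ∑ j, T i j := by
    rw [← hE]
    have h1 : (∑ i, a i * κ i) * (∑ j, ((κ j)⁻¹)^2) = ∑ i, ∑ j, (a i * κ i) * ((κ j)⁻¹)^2 :=
      Finset.sum_mul_sum _ _ _ _
    have h2 : (∑ i, (κ i)⁻¹) * (∑ j, a j) = ∑ i, ∑ j, (κ i)⁻¹ * a j :=
      Finset.sum_mul_sum _ _ _ _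
    rw [h1, h2, ← Finset.sum_sub_distrib]
    simp_rw [← Finset.sum_sub_distrib]
    set f : Fin n → Fin n → ℝ := fun i j => (a i * κ i) * ((κ j)⁻¹)^2 - (κ i)⁻¹ * a j with hf
    have hswap : ∑ i, ∑ j, f i j = ∑ i, ∑ j, f j i := Finset.sum_comm
    have hhalf : ∑ i, ∑ j, f i j = (1/2) * ∑ i, ∑ j, (f i j + f j i) := by
      simp_rw [Finset.sum_add_distrib]
      rw [← hswap]; ring
    rw [hhalf]
    congr 1
    apply Finset.sum_congr rfl; intro i _
    apply Finset.sum_congr rfl; intro j _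
    have hi := (hκ' i).ne'
    have hj := (hκ' j).ne'
    rw [hf, hT]
    field_simp
    ring
  rw [hiden]
  have hTnn : ∀ i ∈ Finset.univ, (0:ℝ) ≤ ∑ j, T i j :=
    fun i _ => Finset.sum_nonneg (fun j _ => (hTkey i j).1)
  have hnn : 0 ≤ ∑ i, ∑ j, T i j := Finset.sum_nonneg hTnn
  constructor
  · linarith
  · constructor
    · intro h0
      have hsum0 : ∑ i, ∑ j, T i j = 0 := by linarith
      intro i j
      have := (Finset.sum_eq_zero_iff_of_nonneg hTnn).mp hsum0 i (Finset.mem_univ i)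
      have := (Finset.sum_eq_zero_iff_of_nonneg
        (fun j _ => (hTkey i j).1)).mp this j (Finset.mem_univ j)
      exact (hTkey i j).2.mp this
    · intro hall
      have : ∀ i ∈ Finset.univ, ∑ j, T i j = 0 := by
        intro i _
        exact Finset.sum_eq_zero (fun j _ => (hTkey i j).2.mpr (hall i j))
      rw [Finset.sum_eq_zero this]; ring
end

section
/- Let n ≥ 2 and let t₁, …, tₙ be positive reals with ∑ᵢ tᵢ = 1. Then for any fixed index i and all y₁, …, yₙ ∈ ℝ, ∑ₚ (yₚ²/tₚ) − 4yᵢ·∑ₚ yₚ ≥ (1 − 8tᵢ + 4tᵢ²)·(∑ₚ yₚ)². -/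
/-!
Split off the `i`-th term. By Cauchy–Schwarz the remaining terms satisfy
`(∑_{p ≠ i} yₚ)² ≤ (1 - tᵢ) ∑_{p ≠ i} yₚ²/tₚ`, which reduces the claim to a two-variable inequality
in `a = yᵢ` and `S = ∑ₚ yₚ`; for `tᵢ < 1` its defect is the square
`(a - tᵢ(3 - 2tᵢ)S)² / (tᵢ(1 - tᵢ))`, the minimum being attained at the Lagrange point.
-/

open Finset

theorem quadratic_le_sq_div_add_sub (a T Q u : ℝ) (hu : 0 < u) (hu1 : u ≤ 1) (hQ : 0 ≤ Q)
    (hT : T ^ 2 ≤ (1 - u) * Q) :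
    (1 - 8 * u + 4 * u ^ 2) * (a + T) ^ 2 ≤ a ^ 2 / u + Q - 4 * a * (a + T) := by
  obtain hlt | rfl := hu1.lt_or_eq
  · have hu' : 0 < 1 - u := sub_pos.2 hlt
    have hTQ : T ^ 2 / (1 - u) ≤ Q := by rwa [div_le_iff₀' hu']
    have hdefect :
        a ^ 2 / u + T ^ 2 / (1 - u) - 4 * a * (a + T) - (1 - 8 * u + 4 * u ^ 2) * (a + T) ^ 2 =
          (a - u * (3 - 2 * u) * (a + T)) ^ 2 / (u * (1 - u)) := by
      field_simp
      ring
    have : 0 ≤ (a - u * (3 - 2 * u) * (a + T)) ^ 2 / (u * (1 - u)) := by positivity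
    linarith
  · obtain rfl : T = 0 := by simpa using hT
    linarith

theorem stmt2_general {n : ℕ} (t y : Fin n → ℝ)
    (ht : ∀ p, 0 < t p) (hsum : ∑ p, t p = 1) (i : Fin n) :
    (1 - 8 * t i + 4 * t i ^ 2) * (∑ p, y p) ^ 2 ≤
      ∑ p, (y p) ^ 2 / t p - 4 * y i * ∑ p, y p := by
  have hi := mem_univ i
  have hrest_t : ∑ p ∈ univ.erase i, t p = 1 - t i := by
    rw [← hsum, ← add_sum_erase univ t hi, add_sub_cancel_left]
  have hy : ∑ p, y p = y i + ∑ p ∈ univ.erase i, y p := (add_sum_erase univ y hi).symm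
  have hquot : ∑ p, y p ^ 2 / t p = y i ^ 2 / t i + ∑ p ∈ univ.erase i, y p ^ 2 / t p :=
    (add_sum_erase univ _ hi).symm
  have hcauchy : (∑ p ∈ univ.erase i, y p) ^ 2 ≤
      (1 - t i) * ∑ p ∈ univ.erase i, y p ^ 2 / t p := by
    rw [← hrest_t]
    exact sum_sq_le_sum_mul_sum_of_sq_le_mul _ (fun p _ => (ht p).le)
      (fun p _ => div_nonneg (sq_nonneg _) (ht p).le) fun p _ => (mul_div_cancel₀ _ (ht p).ne').ge
  have hti_le : t i ≤ 1 := hsum ▸ single_le_sum (fun p _ => (ht p).le) hi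
  rw [hquot, hy]
  exact quadratic_le_sq_div_add_sub _ _ _ _ (ht i) hti_le
    (sum_nonneg fun p _ => div_nonneg (sq_nonneg _) (ht p).le) hcauchy

/-- the Lagrange-multiplier inequality from Section 5 (Lemma 6.2 of Gao–Li–Ma):
if `tₚ > 0` sum to `1`, then `∑ₚ yₚ²/tₚ − 4yᵢ ∑ₚ yₚ ≥ (1 − 8tᵢ + 4tᵢ²)(∑ₚ yₚ)²`. -/
theorem stmt2 {n : ℕ} (hn : 2 ≤ n) (t y : Fin n → ℝ)
    (ht : ∀ p, 0 < t p) (hsum : ∑ p, t p = 1) (i : Fin n) :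
    (1 - 8 * t i + 4 * t i ^ 2) * (∑ p, y p) ^ 2 ≤
      ∑ p, (y p) ^ 2 / t p - 4 * y i * ∑ p, y p :=
  stmt2_general t y ht hsum i
end

section
/- Let F(κ) = (∑ᵢ κᵢᵏ)^α on Γ₊ ⊂ ℝⁿ with k ≥ 1 and α ≥ 1/k. Then for all κ ∈ Γ₊ and all (y₁,…,yₙ) ∈ ℝⁿ: ∑ᵢ κᵢ⁻¹ (∂log F/∂κᵢ) yᵢ² + ∑_{i,j} (∂²log F/∂κᵢ∂κⱼ) yᵢ yⱼ ≥ 0. -/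
/-!
Near a point of the positive cone, `log F = α log S` with `S = ∑ κᵢᵏ`, so the gradient and Hessian
of `log F` are explicit. With weights `wᵢ = κᵢᵏ` and `uᵢ = yᵢ / κᵢ` the quadratic form collapses to
`α k² (S ∑ wᵢ uᵢ² - (∑ wᵢ uᵢ)²) / S²`, which is nonnegative by the weighted Cauchy–Schwarz
inequality since `α ≥ 1/k > 0`.
-/

open Finset

noncomputable def pd2 {n : ℕ} (F : (Fin n → ℝ) → ℝ) (κ : Fin n → ℝ) (i j : Fin n) : ℝ :=
  fderiv ℝ (fun x => pd F x j) κ (Pi.single i 1)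

open Filter Topology

theorem Finset.sq_sum_mul_le_sum_mul_sum_mul_sq {ι R : Type*} [CommSemiring R] [LinearOrder R]
    [IsStrictOrderedRing R] [ExistsAddOfLE R] (s : Finset ι) {w : ι → R}
    (hw : ∀ i ∈ s, 0 ≤ w i) (u : ι → R) :
    (∑ i ∈ s, w i * u i) ^ 2 ≤ (∑ i ∈ s, w i) * ∑ i ∈ s, w i * u i ^ 2 :=
  sum_sq_le_sum_mul_sum_of_sq_le_mul s hw (fun i hi => mul_nonneg (hw i hi) (sq_nonneg _))
    fun i _ => le_of_eq (by ring)

section PartialDerivative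

variable {n : ℕ} {f g : (Fin n → ℝ) → ℝ} {x : Fin n → ℝ}

lemma pd_congr (h : f =ᶠ[𝓝 x] g) (i : Fin n) : pd f x i = pd g x i := by
  rw [pd, pd, h.fderiv_eq]

lemma HasFDerivAt.pd_eq {f' : (Fin n → ℝ) →L[ℝ] ℝ} (h : HasFDerivAt f f' x) (i : Fin n) :
    pd f x i = f' (Pi.single i 1) := by
  rw [pd, h.fderiv]

lemma pd2_eq_of_eventuallyEq_pd {j : Fin n} {g' : (Fin n → ℝ) →L[ℝ] ℝ}
    (h : (fun z => pd f z j) =ᶠ[𝓝 x] g) (hg : HasFDerivAt g g' x) (i : Fin n) :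
    pd2 f x i j = g' (Pi.single i 1) :=
  (pd_congr h i).trans (hg.pd_eq i)

end PartialDerivative

section PowerSum

variable {n k : ℕ} {α : ℝ} {x : Fin n → ℝ}

lemma hasFDerivAt_sum_pow (k : ℕ) (x : Fin n → ℝ) :
    HasFDerivAt (fun z : Fin n → ℝ => ∑ i, z i ^ k)
      (∑ i, ((k : ℝ) * x i ^ (k - 1)) •
        ContinuousLinearMap.proj (R := ℝ) (φ := fun _ : Fin n => ℝ) i) x :=
  HasFDerivAt.fun_sum fun i _ =>
    (hasDerivAt_pow k (x i)).comp_hasFDerivAt x (hasFDerivAt_apply i x)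

lemma eventually_sum_pow_pos (hS : 0 < ∑ i, x i ^ k) : ∀ᶠ z in 𝓝 x, 0 < ∑ i, z i ^ k :=
  continuousAt_const.eventually_lt
    (continuous_finsetSum _ fun i _ => (continuous_apply i).pow k).continuousAt hS

lemma pd_log_rpow_sum_pow (hS : 0 < ∑ i, x i ^ k) (j : Fin n) :
    pd (fun z => Real.log ((∑ i, z i ^ k) ^ α)) x j =
      α * k * x j ^ (k - 1) * (∑ i, x i ^ k)⁻¹ := by
  have hlog : (fun z => Real.log ((∑ i, z i ^ k) ^ α)) =ᶠ[𝓝 x]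
      fun z => α * Real.log (∑ i, z i ^ k) :=
    (eventually_sum_pow_pos hS).mono fun z hz => Real.log_rpow hz α
  rw [pd_congr hlog, (((hasFDerivAt_sum_pow k x).log hS.ne').const_mul α).pd_eq]
  simp only [smul_apply, _root_.sum_apply, ContinuousLinearMap.proj_apply, Pi.single_apply,
    smul_eq_mul, mul_ite, mul_one, mul_zero, sum_ite_eq', mem_univ, if_true]
  ring

lemma pd2_log_rpow_sum_pow (hS : 0 < ∑ i, x i ^ k) (i j : Fin n) :
    pd2 (fun z => Real.log ((∑ i, z i ^ k) ^ α)) x i j =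
      α * k * ((k - 1 : ℕ) * x j ^ (k - 1 - 1) * (if i = j then 1 else 0) * (∑ i, x i ^ k)⁻¹ -
        k * x i ^ (k - 1) * x j ^ (k - 1) * ((∑ i, x i ^ k) ^ 2)⁻¹) := by
  have hpd : (fun z => pd (fun z => Real.log ((∑ i, z i ^ k) ^ α)) z j) =ᶠ[𝓝 x]
      fun z => α * k * z j ^ (k - 1) * (∑ i, z i ^ k)⁻¹ :=
    (eventually_sum_pow_pos hS).mono fun z hz => pd_log_rpow_sum_pow hz j
  have hinv := (hasDerivAt_inv hS.ne').comp_hasFDerivAt x (hasFDerivAt_sum_pow k x)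
  have hpow :=
    (hasDerivAt_pow (k - 1) (x j)).comp_hasFDerivAt x (hasFDerivAt_apply (𝕜 := ℝ) j x)
  have hG : HasFDerivAt (fun z : Fin n → ℝ => α * k * z j ^ (k - 1) * (∑ i, z i ^ k)⁻¹) _ x :=
    (hpow.const_mul (α * k)).mul hinv
  rw [pd2_eq_of_eventuallyEq_pd hpd hG]
  simp only [Function.comp_apply, neg_smul, smul_neg, add_apply, neg_apply, smul_apply,
    _root_.sum_apply, ContinuousLinearMap.proj_apply, Pi.single_apply, smul_eq_mul, mul_ite,
    mul_one, mul_zero, sum_ite_eq', mem_univ, if_true]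
  rcases eq_or_ne i j with rfl | hij
  · simp only [if_true]
    ring
  · simp only [hij, hij.symm, if_false]
    ring

lemma sum_inv_mul_pd_log_rpow_sum_pow (hk : 1 ≤ k) (hS : 0 < ∑ i, x i ^ k)
    (hx : ∀ i, x i ≠ 0) (y : Fin n → ℝ) :
    ∑ i, (x i)⁻¹ * pd (fun z => Real.log ((∑ i, z i ^ k) ^ α)) x i * y i ^ 2 =
      α * k * (∑ i, x i ^ k * (y i / x i) ^ 2) * (∑ i, x i ^ k)⁻¹ := by
  simp_rw [pd_log_rpow_sum_pow hS, mul_sum, sum_mul]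
  refine sum_congr rfl fun i _ => ?_
  rw [pow_sub₀ _ (hx i) hk]
  field_simp

lemma sum_pd2_log_rpow_sum_pow (hk : 1 ≤ k) (hS : 0 < ∑ i, x i ^ k)
    (hx : ∀ i, x i ≠ 0) (y : Fin n → ℝ) :
    ∑ i, ∑ j, pd2 (fun z => Real.log ((∑ i, z i ^ k) ^ α)) x i j * y i * y j =
      α * k * ((k - 1 : ℕ) * (∑ i, x i ^ k * (y i / x i) ^ 2) * (∑ i, x i ^ k)⁻¹ -
        k * (∑ i, x i ^ k * (y i / x i)) ^ 2 * ((∑ i, x i ^ k) ^ 2)⁻¹) := by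
  set S := ∑ i, x i ^ k
  have hdiag : ∀ i, ((k - 1 : ℕ) : ℝ) * x i ^ (k - 1 - 1) * y i ^ 2 =
      (k - 1 : ℕ) * (x i ^ k * (y i / x i) ^ 2) := by
    intro i
    rcases Nat.lt_or_ge k 2 with hk2 | hk2
    · simp [show k - 1 = 0 by omega]
    · rw [Nat.sub_sub, pow_sub₀ _ (hx i) hk2]
      field_simp
  have hoff : ∀ i, x i ^ (k - 1) * y i = x i ^ k * (y i / x i) := by
    intro i
    rw [pow_sub₀ _ (hx i) hk]
    field_simp
  have hterm : ∀ i j, pd2 (fun z => Real.log ((∑ i, z i ^ k) ^ α)) x i j * y i * y j =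
      (if i = j then α * k * S⁻¹ * ((k - 1 : ℕ) * x i ^ (k - 1 - 1) * y i ^ 2) else 0) -
        α * k ^ 2 * (S ^ 2)⁻¹ * ((x i ^ (k - 1) * y i) * (x j ^ (k - 1) * y j)) := by
    intro i j
    rw [pd2_log_rpow_sum_pow hS]
    split_ifs with hij
    · subst hij; ring
    · ring
  simp_rw [hterm, sum_sub_distrib, sum_ite_eq, mem_univ, if_true, ← mul_sum, ← sum_mul,
    hdiag, hoff, ← mul_sum]
  ring

end PowerSum

/-- Condition 1.1 iv) for `F = Sₖ^α = (∑ κᵢᵏ)^α` with `k ≥ 1`, `α ≥ 1/k`: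
`∑ᵢ κᵢ⁻¹ (∂log F/∂κᵢ) yᵢ² + ∑_{i,j} (∂²log F/∂κᵢ∂κⱼ) yᵢyⱼ ≥ 0` on the positive cone. -/
theorem stmt9 {n : ℕ} (k : ℕ) (hk : 1 ≤ k) (α : ℝ) (hα : 1 / (k : ℝ) ≤ α)
    (F : (Fin n → ℝ) → ℝ) (hF : F = fun κ => (∑ i, κ i ^ k) ^ α) :
    ∀ κ : Fin n → ℝ, (∀ i, 0 < κ i) → ∀ y : Fin n → ℝ,
      0 ≤ ∑ i, (κ i)⁻¹ * pd (fun x => Real.log (F x)) κ i * (y i) ^ 2 +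
          ∑ i, ∑ j, pd2 (fun x => Real.log (F x)) κ i j * y i * y j := by
  intro κ hκ y
  subst hF
  rcases isEmpty_or_nonempty (Fin n) with _ | _
  · simp
  have hS : 0 < ∑ i, κ i ^ k := sum_pos (fun i _ => pow_pos (hκ i) k) univ_nonempty
  have hκ0 : ∀ i, κ i ≠ 0 := fun i => (hκ i).ne'
  rw [sum_inv_mul_pd_log_rpow_sum_pow hk hS hκ0, sum_pd2_log_rpow_sum_pow hk hS hκ0]
  have hCS := sq_sum_mul_le_sum_mul_sum_mul_sq univ (fun i _ => (pow_pos (hκ i) k).le)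
    fun i => y i / κ i
  have hα0 : 0 ≤ α := le_trans (by positivity) hα
  calc 0 ≤ α * k ^ 2 * ((∑ i, κ i ^ k) * (∑ i, κ i ^ k * (y i / κ i) ^ 2)
        - (∑ i, κ i ^ k * (y i / κ i)) ^ 2) / (∑ i, κ i ^ k) ^ 2 := by
        have := sub_nonneg.2 hCS
        positivity
    _ = _ := by
        push_cast [Nat.cast_sub hk]
        field_simp
        ring
end

section
/- Let F be C¹ on Γ₊ ⊂ ℝⁿ satisfying ((∂F/∂κᵢ)κᵢ² − (∂F/∂κⱼ)κⱼ²)(κᵢ − κⱼ) ≥ 0 for all i ≠ j (Condition iii). Then for κ ∈ Γ₊ and any symmetric array (h_{ijp}) of reals (indices in {1,…,n}), ∑ₚ κₚ⁻² ∑_{i≠j} ((∂F/∂κᵢ) − (∂F/∂κⱼ))(κᵢ − κⱼ)⁻¹ h_{ijp}² + 2∑_{i,q: q≠i} ∑ₚ (∂F/∂κᵢ) κₚ⁻² κ_q⁻¹ h_{pqi}² ≥ 0, where sums over i ≠ j with κᵢ = κⱼ are interpreted via the limit (∂²F terms) and may be taken ≥ 0 by assumption. -/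
open Finset

/-!
Write `fᵢ = ∂F/∂κᵢ`. For distinct nonzero `κᵢ, κⱼ` the divided difference splits as
`(fᵢ - fⱼ)/(κᵢ - κⱼ) = (fᵢκᵢ² - fⱼκⱼ²)/((κᵢ - κⱼ)κᵢκⱼ) - fᵢ/κⱼ - fⱼ/κᵢ`,
whose first term is nonnegative by condition iii). Summed against `h_{ijp}²`, which is symmetric
in `i, j`, the two remaining terms contribute the same amount, and by the full symmetry of `h` that
amount is exactly the second sum of the inequality, so they cancel against it.
-/

lemma sum_sum_erase_comm {ι M : Type*} [Fintype ι] [DecidableEq ι] [AddCommMonoid M]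
    (g : ι → ι → M) :
    ∑ i, ∑ j ∈ univ.erase i, g i j = ∑ i, ∑ j ∈ univ.erase i, g j i :=
  sum_comm' fun i j => by simp [ne_comm]

lemma sub_mul_inv_sub_eq {a b x y : ℝ} (hx : x ≠ 0) (hy : y ≠ 0) (hxy : x ≠ y) :
    (a - b) * (x - y)⁻¹ =
      (a * x ^ 2 - b * y ^ 2) * (x - y)⁻¹ * x⁻¹ * y⁻¹ - a * y⁻¹ - b * x⁻¹ := by
  have : x - y ≠ 0 := sub_ne_zero.mpr hxy
  field_simp
  ring

lemma mul_inv_sub_mul_inv_mul_inv_nonneg {a b x y : ℝ} (hx : 0 ≤ x) (hy : 0 ≤ y)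
    (h : 0 ≤ (a * x ^ 2 - b * y ^ 2) * (x - y)) :
    0 ≤ (a * x ^ 2 - b * y ^ 2) * (x - y)⁻¹ * x⁻¹ * y⁻¹ := by
  have hquot : (a * x ^ 2 - b * y ^ 2) * (x - y)⁻¹ =
      (a * x ^ 2 - b * y ^ 2) * (x - y) * ((x - y)⁻¹) ^ 2 := by
    rcases eq_or_ne (x - y) 0 with hxy | hxy
    · simp [hxy]
    · field_simp
  rw [hquot]
  positivity

section

variable {ι : Type*} [Fintype ι] [DecidableEq ι]

lemma sum_sum_erase_sub_mul_inv_sub_eq {f κ : ι → ℝ} (hκ : ∀ i, κ i ≠ 0)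
    (hinj : Pairwise fun i j => κ i ≠ κ j) {H : ι → ι → ℝ} (hH : ∀ i j, H i j = H j i) :
    ∑ i, ∑ j ∈ univ.erase i, (f i - f j) * (κ i - κ j)⁻¹ * H i j =
      ∑ i, ∑ j ∈ univ.erase i,
          (f i * κ i ^ 2 - f j * κ j ^ 2) * (κ i - κ j)⁻¹ * (κ i)⁻¹ * (κ j)⁻¹ * H i j
        - 2 * ∑ i, ∑ j ∈ univ.erase i, f i * (κ j)⁻¹ * H i j := by
  have hswap : ∑ i, ∑ j ∈ univ.erase i, f j * (κ i)⁻¹ * H i j =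
      ∑ i, ∑ j ∈ univ.erase i, f i * (κ j)⁻¹ * H i j := by
    rw [sum_sum_erase_comm]
    simp only [hH]
  rw [two_mul, ← sub_sub]
  nth_rw 2 [← hswap]
  simp only [← sum_sub_distrib]
  refine sum_congr rfl fun i _ => sum_congr rfl fun j hj => ?_
  rw [sub_mul_inv_sub_eq (hκ i) (hκ j) (hinj (ne_of_mem_erase hj).symm)]
  ring

theorem sum_divided_difference_add_nonneg {f κ w : ι → ℝ} (hκ : ∀ i, 0 < κ i)
    (hinj : Pairwise fun i j => κ i ≠ κ j) (hw : ∀ p, 0 ≤ w p)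
    (hf : Pairwise fun i j => 0 ≤ (f i * κ i ^ 2 - f j * κ j ^ 2) * (κ i - κ j))
    {h : ι → ι → ι → ℝ} (hsym₁ : ∀ i j p, h i j p = h j i p)
    (hsym₂ : ∀ i j p, h i j p = h i p j) :
    0 ≤ (∑ p, w p * ∑ i, ∑ j ∈ univ.erase i, (f i - f j) * (κ i - κ j)⁻¹ * h i j p ^ 2)
      + 2 * ∑ i, ∑ q ∈ univ.erase i, ∑ p, f i * w p * (κ q)⁻¹ * h p q i ^ 2 := by
  have hfirst :
      ∑ p, w p * ∑ i, ∑ j ∈ univ.erase i, (f i - f j) * (κ i - κ j)⁻¹ * h i j p ^ 2 =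
        ∑ p, w p * ∑ i, ∑ j ∈ univ.erase i,
            (f i * κ i ^ 2 - f j * κ j ^ 2) * (κ i - κ j)⁻¹ * (κ i)⁻¹ * (κ j)⁻¹ * h i j p ^ 2
          - 2 * ∑ p, w p * ∑ i, ∑ j ∈ univ.erase i, f i * (κ j)⁻¹ * h i j p ^ 2 := by
    rw [mul_sum, ← sum_sub_distrib]
    refine sum_congr rfl fun p _ => ?_
    rw [sum_sum_erase_sub_mul_inv_sub_eq (fun i => (hκ i).ne') hinj
      (fun i j => by rw [hsym₁]), mul_sub, mul_left_comm]
  have hsecond : ∑ i, ∑ q ∈ univ.erase i, ∑ p, f i * w p * (κ q)⁻¹ * h p q i ^ 2 =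
      ∑ p, w p * ∑ i, ∑ j ∈ univ.erase i, f i * (κ j)⁻¹ * h i j p ^ 2 := calc
    _ = ∑ i, ∑ q ∈ univ.erase i, ∑ p, w p * (f i * (κ q)⁻¹ * h i q p ^ 2) := by
      refine sum_congr rfl fun i _ => sum_congr rfl fun q _ => sum_congr rfl fun p _ => ?_
      rw [hsym₁, hsym₂, hsym₁]
      ring
    _ = _ := by
      simp only [mul_sum]
      rw [sum_comm]
      exact sum_congr rfl fun i _ => sum_comm
  rw [hfirst, hsecond, sub_add_cancel]
  refine sum_nonneg fun p _ => mul_nonneg (hw p) <| sum_nonneg fun i _ =>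
    sum_nonneg fun j hj => mul_nonneg ?_ (sq_nonneg _)
  exact mul_inv_sub_mul_inv_mul_inv_nonneg (hκ i).le (hκ j).le (hf (ne_of_mem_erase hj).symm)

end

theorem stmt14_general {n : ℕ}
    (Γ : Set (Fin n → ℝ)) (hΓ : Γ = {κ | ∀ i, 0 < κ i})
    (F : (Fin n → ℝ) → ℝ)
    (hiii : ∀ κ ∈ Γ, ∀ i j, i ≠ j →
      0 ≤ (pd F κ i * (κ i) ^ 2 - pd F κ j * (κ j) ^ 2) * (κ i - κ j)) :
    ∀ κ ∈ Γ, (∀ i j : Fin n, i ≠ j → κ i ≠ κ j) →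
      ∀ h : Fin n → Fin n → Fin n → ℝ,
        (∀ i j p, h i j p = h j i p) → (∀ i j p, h i j p = h i p j) →
        0 ≤ (∑ p, ((κ p)⁻¹) ^ 2 *
              ∑ i, ∑ j ∈ Finset.univ.erase i,
                (pd F κ i - pd F κ j) * (κ i - κ j)⁻¹ * (h i j p) ^ 2)
            + 2 * ∑ i, ∑ q ∈ Finset.univ.erase i, ∑ p,
                pd F κ i * ((κ p)⁻¹) ^ 2 * (κ q)⁻¹ * (h p q i) ^ 2 := by
  intro κ hκΓ hinj h hsym₁ hsym₂
  have hκ : ∀ i, 0 < κ i := by rwa [hΓ] at hκΓ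
  exact sum_divided_difference_add_nonneg hκ hinj (fun _ => sq_nonneg _) (hiii κ hκΓ)
    hsym₁ hsym₂

/-- inequality (4.3) (cond3) of Section 4.  For `F` `C¹` on the positive cone
satisfying condition iii) `((∂F/∂κᵢ)κᵢ² − (∂F/∂κⱼ)κⱼ²)(κᵢ − κⱼ) ≥ 0`, `κ` with pairwise
distinct positive entries, and a fully symmetric array `h`,
`∑ₚ κₚ⁻² ∑_{i≠j} ((∂F/∂κᵢ) − (∂F/∂κⱼ))(κᵢ−κⱼ)⁻¹ h_{ijp}²
 + 2 ∑_{i} ∑_{q≠i} ∑ₚ (∂F/∂κᵢ) κₚ⁻² κ_q⁻¹ h_{pqi}² ≥ 0`. -/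
theorem stmt14 {n : ℕ}
    (Γ : Set (Fin n → ℝ)) (hΓ : Γ = {κ | ∀ i, 0 < κ i})
    (F : (Fin n → ℝ) → ℝ)
    (hC1 : ContDiffOn ℝ 1 F Γ)
    (hiii : ∀ κ ∈ Γ, ∀ i j, i ≠ j →
      0 ≤ (pd F κ i * (κ i) ^ 2 - pd F κ j * (κ j) ^ 2) * (κ i - κ j)) :
    ∀ κ ∈ Γ, (∀ i j : Fin n, i ≠ j → κ i ≠ κ j) →
      ∀ h : Fin n → Fin n → Fin n → ℝ,
        (∀ i j p, h i j p = h j i p) → (∀ i j p, h i j p = h i p j) →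
        0 ≤ (∑ p, ((κ p)⁻¹) ^ 2 *
              ∑ i, ∑ j ∈ Finset.univ.erase i,
                (pd F κ i - pd F κ j) * (κ i - κ j)⁻¹ * (h i j p) ^ 2)
            + 2 * ∑ i, ∑ q ∈ Finset.univ.erase i, ∑ p,
                pd F κ i * ((κ p)⁻¹) ^ 2 * (κ q)⁻¹ * (h p q i) ^ 2 :=
  stmt14_general Γ hΓ F hiii
end
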